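/- arXiv:1912.12728 — 6 statements merged into one kernel-verified Lean document; each statement's English description precedes it below -/
import Mathlib

section
/- For every integer M ≥ 2, the Adams-Moulton coefficients satisfy β₁ > β₀, i.e., (1/(M-1)!)·∫₀¹ (1-u)·∏_{i=1}^{M-1}(u+i) du > (1/M!)·∫₀¹ ∏_{i=0}^{M-1}(u+i) du. -/
/-!
Write `Q u = ∏_{i=1}^{M-1} (u + i)`, so that the integrand of `β₀` is `u Q u`.
The reflection `u ↦ 1 - u` turns `β₀` into `(1/M!) ∫₀¹ (1 - u) Q (1 - u)`, which is
compared pointwise with `β₁ = (1/(M-1)!) ∫₀¹ (1 - u) Q u`: factor by factor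
`i (1 - u + i) ≤ (i + 1) (u + i)`, hence `(M-1)! Q (1 - u) < M! Q u` for `0 < u ≤ 1`.
-/

open Finset intervalIntegral
open scoped Nat

lemma prod_range_succ_add_eq_mul_prod_Icc (n : ℕ) (u : ℝ) :
    ∏ i ∈ range (n + 1), (u + (i : ℝ)) = u * ∏ i ∈ Icc 1 n, (u + (i : ℝ)) := by
  rw [range_eq_Ico, prod_eq_prod_Ico_succ_bot (by omega), Ico_add_one_right_eq_Icc]
  simp

lemma factorial_mul_prod_Icc_one_sub_lt {n : ℕ} (hn : 1 ≤ n) {u : ℝ} (hu0 : 0 < u)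
    (hu1 : u ≤ 1) :
    (n ! : ℝ) * ∏ i ∈ Icc 1 n, (1 - u + (i : ℝ)) <
      ((n + 1)! : ℝ) * ∏ i ∈ Icc 1 n, (u + (i : ℝ)) := by
  induction n, hn using Nat.le_induction with
  | base => norm_num; linarith
  | succ n hn ih =>
    have hfactor : ((n : ℝ) + 1) * (1 - u + (n + 1)) ≤ ((n : ℝ) + 2) * (u + (n + 1)) := by
      nlinarith
    calc ((n + 1)! : ℝ) * ∏ i ∈ Icc 1 (n + 1), (1 - u + (i : ℝ))
        = ((n ! : ℝ) * ∏ i ∈ Icc 1 n, (1 - u + (i : ℝ))) *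
            ((n + 1) * (1 - u + (n + 1))) := by
          rw [prod_Icc_succ_top (by omega), Nat.factorial_succ]; push_cast; ring
      _ < (((n + 1)! : ℝ) * ∏ i ∈ Icc 1 n, (u + (i : ℝ))) * ((n + 2) * (u + (n + 1))) :=
          mul_lt_mul_of_lt_of_le_of_nonneg_of_pos ih hfactor (by positivity) (by positivity)
      _ = ((n + 1 + 1)! : ℝ) * ∏ i ∈ Icc 1 (n + 1), (u + (i : ℝ)) := by
          rw [prod_Icc_succ_top (by omega), Nat.factorial_succ (n + 1)]; push_cast; ring

lemma integral_prod_range_succ_add_eq_integral_comp_one_sub (n : ℕ) :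
    ∫ u in (0 : ℝ)..1, ∏ i ∈ range (n + 1), (u + (i : ℝ)) =
      ∫ u in (0 : ℝ)..1, (1 - u) * ∏ i ∈ Icc 1 n, (1 - u + (i : ℝ)) := by
  simp_rw [prod_range_succ_add_eq_mul_prod_Icc]
  simpa only [sub_zero, sub_self] using (integral_comp_sub_left (a := 0) (b := 1)
    (fun u : ℝ => u * ∏ i ∈ Icc 1 n, (u + (i : ℝ))) 1).symm

lemma one_div_factorial_mul_integral_comp_one_sub_lt {n : ℕ} (hn : 1 ≤ n) :
    1 / ((n + 1)! : ℝ) * ∫ u in (0 : ℝ)..1, (1 - u) * ∏ i ∈ Icc 1 n, (1 - u + (i : ℝ)) <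
      1 / (n ! : ℝ) * ∫ u in (0 : ℝ)..1, (1 - u) * ∏ i ∈ Icc 1 n, (u + (i : ℝ)) := by
  have hpointwise {u : ℝ} (hu0 : 0 < u) (hu1 : u ≤ 1) :
      1 / ((n + 1)! : ℝ) * ∏ i ∈ Icc 1 n, (1 - u + (i : ℝ)) <
        1 / (n ! : ℝ) * ∏ i ∈ Icc 1 n, (u + (i : ℝ)) := by
    rw [one_div_mul_eq_div, one_div_mul_eq_div, div_lt_div_iff₀ (by positivity) (by positivity)]
    linarith [factorial_mul_prod_Icc_one_sub_lt hn hu0 hu1]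
  rw [← integral_const_mul, ← integral_const_mul]
  refine integral_lt_integral_of_continuousOn_of_le_of_exists_lt one_pos
    (by fun_prop) (by fun_prop) (fun u ⟨hu0, hu1⟩ => ?_) ⟨1 / 2, by norm_num, ?_⟩
  · rw [mul_left_comm, mul_left_comm (1 / (n ! : ℝ))]
    exact mul_le_mul_of_nonneg_left (hpointwise hu0 hu1).le (by linarith)
  · rw [mul_left_comm, mul_left_comm (1 / (n ! : ℝ))]
    exact mul_lt_mul_of_pos_left (hpointwise (by norm_num) (by norm_num)) (by norm_num)

/-- For every integer `M ≥ 2`, the Adams-Moulton coefficients satisfy `β₁ > β₀`: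
`(1/(M-1)!) ∫₀¹ (1-u) ∏_{i=1}^{M-1} (u+i) du > (1/M!) ∫₀¹ ∏_{i=0}^{M-1} (u+i) du`. -/
theorem am_beta1_gt_beta0 (M : ℕ) (hM : 2 ≤ M) :
    (1 / (Nat.factorial (M - 1) : ℝ)) *
      ∫ u in (0:ℝ)..1, (1 - u) * ∏ i ∈ Finset.Icc 1 (M - 1), (u + (i : ℝ)) >
    (1 / (Nat.factorial M : ℝ)) *
      ∫ u in (0:ℝ)..1, ∏ i ∈ Finset.range M, (u + (i : ℝ)) := by
  obtain ⟨n, rfl⟩ : ∃ n, M = n + 1 := ⟨M - 1, by omega⟩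
  rw [Nat.add_sub_cancel, integral_prod_range_succ_add_eq_integral_comp_one_sub]
  exact one_div_factorial_mul_integral_comp_one_sub_lt (by omega)
end

section
/- For every integer M ≥ 2, the inequality (M/(M+1))·∫₀¹ ∏_{i=1}^{M-1}(u+i) du > ∫₀¹ ∏_{i=0}^{M-1}(u+i) du holds. -/
/-! With `P u = ∏_{i=1}^{M-1} (u + i)` the integrand on the right is `u P(u)`, so the claim reads
`∫₀¹ u P < M ∫₀¹ (1 - u) P`. The polynomial `P` is strictly increasing on `[0, 1]` and
`P 1 = M! = M P 0`, hence `∫₀¹ u P < P 1 / 2 = M P 0 / 2 ≤ M ∫₀¹ (1 - u) P`. -/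

open Finset intervalIntegral

section WeightedIntegral

variable {f : ℝ → ℝ}

theorem integral_id_mul_lt_half_of_strictMonoOn (hf : ContinuousOn f (Set.Icc 0 1))
    (hmono : StrictMonoOn f (Set.Icc 0 1)) :
    ∫ u in (0:ℝ)..1, u * f u < f 1 / 2 := by
  have hmem : ∀ {u : ℝ}, u ∈ Set.Ioc (0:ℝ) 1 → u ∈ Set.Icc (0:ℝ) 1 :=
    fun hu => Set.Ioc_subset_Icc_self hu
  calc ∫ u in (0:ℝ)..1, u * f u < ∫ u in (0:ℝ)..1, u * f 1 := by
        refine integral_lt_integral_of_continuousOn_of_le_of_exists_lt one_pos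
          (continuousOn_id.mul hf) (by fun_prop) (fun u hu => ?_) ⟨1 / 2, by norm_num, ?_⟩
        · exact mul_le_mul_of_nonneg_left
            (hmono.monotoneOn (hmem hu) (by simp) (hmem hu).2) hu.1.le
        · exact mul_lt_mul_of_pos_left (hmono (by norm_num) (by simp) (by norm_num)) (by norm_num)
    _ = f 1 / 2 := by simp [integral_mul_const]; ring

theorem half_le_integral_one_sub_mul_of_monotoneOn (hf : ContinuousOn f (Set.Icc 0 1))
    (hmono : MonotoneOn f (Set.Icc 0 1)) :
    f 0 / 2 ≤ ∫ u in (0:ℝ)..1, (1 - u) * f u := by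
  calc f 0 / 2 = ∫ u in (0:ℝ)..1, (1 - u) * f 0 := by
        simp [integral_mul_const, integral_comp_sub_left fun x : ℝ => x]; ring
    _ ≤ ∫ u in (0:ℝ)..1, (1 - u) * f u := by
        refine integral_mono_on zero_le_one
          ((by fun_prop : Continuous fun u : ℝ => (1 - u) * f 0).intervalIntegrable 0 1)
          ((ContinuousOn.mul (by fun_prop) hf).intervalIntegrable_of_Icc zero_le_one)
          fun u hu => mul_le_mul_of_nonneg_left (hmono (by simp) hu hu.1) (by linarith [hu.2])

theorem integral_id_mul_lt_of_strictMonoOn {c : ℝ} (hc : 0 ≤ c)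
    (hf : ContinuousOn f (Set.Icc 0 1)) (hmono : StrictMonoOn f (Set.Icc 0 1))
    (hf₁ : f 1 ≤ c * f 0) :
    ∫ u in (0:ℝ)..1, u * f u < c / (c + 1) * ∫ u in (0:ℝ)..1, f u := by
  have hfi : IntervalIntegrable f MeasureTheory.volume 0 1 :=
    hf.intervalIntegrable_of_Icc zero_le_one
  have hsplit : ∫ u in (0:ℝ)..1, (1 - u) * f u =
      (∫ u in (0:ℝ)..1, f u) - ∫ u in (0:ℝ)..1, u * f u := by
    simp only [sub_mul, one_mul]
    exact integral_sub hfi (hfi.continuousOn_mul continuousOn_id)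
  have hkey : ∫ u in (0:ℝ)..1, u * f u < c * ∫ u in (0:ℝ)..1, (1 - u) * f u :=
    calc ∫ u in (0:ℝ)..1, u * f u < f 1 / 2 := integral_id_mul_lt_half_of_strictMonoOn hf hmono
      _ ≤ c * (f 0 / 2) := by linarith
      _ ≤ c * ∫ u in (0:ℝ)..1, (1 - u) * f u :=
        mul_le_mul_of_nonneg_left (half_le_integral_one_sub_mul_of_monotoneOn hf hmono.monotoneOn) hc
  rw [hsplit] at hkey
  rw [div_mul_eq_mul_div, lt_div_iff₀ (by linarith)]
  linarith

end WeightedIntegral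

theorem prod_range_succ_eq_mul_prod_Icc {M : Type*} [CommMonoid M] (f : ℕ → M) (n : ℕ) :
    ∏ i ∈ range (n + 1), f i = f 0 * ∏ i ∈ Icc 1 n, f i := by
  rw [range_eq_Ico, prod_eq_prod_Ico_succ_bot n.succ_pos, zero_add, Nat.succ_eq_add_one,
    Ico_add_one_right_eq_Icc]

theorem strictMonoOn_prod_add {ι : Type*} {s : Finset ι} {c : ι → ℝ} (hs : s.Nonempty)
    (hc : ∀ i ∈ s, 0 < c i) : StrictMonoOn (fun u => ∏ i ∈ s, (u + c i)) (Set.Ici 0) :=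
  fun a ha _ _ hab => prod_lt_prod_of_nonempty (fun i hi => by linarith [hc i hi, ha.out])
    (fun _ _ => by linarith) hs

theorem prod_Icc_one_add_natCast (n : ℕ) :
    ∏ i ∈ Icc 1 n, (1 + (i : ℝ)) = (n + 1) * ∏ i ∈ Icc 1 n, (i : ℝ) := by
  induction n with
  | zero => simp
  | succ n ih =>
    rw [prod_Icc_succ_top n.succ_pos, prod_Icc_succ_top n.succ_pos, ih]
    push_cast
    ring

/-- For every integer `M ≥ 2`,
`(M/(M+1)) ∫₀¹ ∏_{i=1}^{M-1} (u+i) du > ∫₀¹ ∏_{i=0}^{M-1} (u+i) du`. -/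
theorem am_inductive_ineq (M : ℕ) (hM : 2 ≤ M) :
    ((M : ℝ) / ((M : ℝ) + 1)) *
      ∫ u in (0:ℝ)..1, ∏ i ∈ Finset.Icc 1 (M - 1), (u + (i : ℝ)) >
    ∫ u in (0:ℝ)..1, ∏ i ∈ Finset.range M, (u + (i : ℝ)) := by
  obtain ⟨n, rfl⟩ : ∃ n, M = n + 1 := ⟨M - 1, by omega⟩
  set P : ℝ → ℝ := fun u => ∏ i ∈ Icc 1 n, (u + (i : ℝ))
  have hmono : StrictMonoOn P (Set.Icc 0 1) :=
    (strictMonoOn_prod_add ⟨1, by simp; omega⟩ fun i hi => by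
      simp only [mem_Icc] at hi; exact_mod_cast hi.1).mono Set.Icc_subset_Ici_self
  have hP₁ : P 1 = (n + 1) * P 0 := by simpa [P] using prod_Icc_one_add_natCast n
  simp only [prod_range_succ_eq_mul_prod_Icc, Nat.cast_zero, add_zero, Nat.add_sub_cancel]
  push_cast
  exact integral_id_mul_lt_of_strictMonoOn (by positivity) (by fun_prop) hmono hP₁.le
end

section
/- For the M-step Adams-Moulton method with M ≥ 2, the signs of consecutive coefficients alternate for indices m ≥ 1: sign(β_{m+1}) = -sign(β_m) for 1 ≤ m ≤ M-1. -/
open Finset intervalIntegral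

/- For `u ∈ (0, 1)` the factor `u + i - 1` is negative for `i = 0` and positive for every `i ≥ 1`,
so the Adams–Moulton integrand `∏_{i ≠ m} (u + i - 1)` is negative on `(0, 1)` whenever `m ≥ 1`.
Hence `(-1)^m β_m` is a positive multiple of a negative integral for every `1 ≤ m ≤ M`,
which is all three claims at once. -/

lemma prod_add_natCast_sub_one_neg {s : Finset ℕ} (hs : 0 ∈ s) {u : ℝ} (hu : u ∈ Set.Ioo 0 1) :
    ∏ i ∈ s, (u + (i : ℝ) - 1) < 0 := by
  rw [← mul_prod_erase s _ hs]
  refine mul_neg_of_neg_of_pos (by simpa using hu.2) (prod_pos fun i hi => ?_)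
  have hi : (1 : ℝ) ≤ i := by exact_mod_cast Nat.one_le_iff_ne_zero.mpr (ne_of_mem_erase hi)
  linarith [hu.1]

lemma integral_prod_add_natCast_sub_one_neg {s : Finset ℕ} (hs : 0 ∈ s) :
    ∫ u in (0 : ℝ)..1, ∏ i ∈ s, (u + (i : ℝ) - 1) < 0 := by
  have hcont : Continuous fun u : ℝ => ∏ i ∈ s, (u + (i : ℝ) - 1) := by fun_prop
  have hpos := intervalIntegral_pos_of_pos_on (hcont.neg.intervalIntegrable 0 1)
    (fun u hu => neg_pos.mpr (prod_add_natCast_sub_one_neg hs hu)) one_pos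
  simp only [Pi.neg_apply, integral_neg] at hpos
  exact neg_pos.mp hpos

lemma neg_one_pow_mul_neg_one_pow_div_mul_neg {m : ℕ} {c I : ℝ} (hc : 0 < c) (hI : I < 0) :
    (-1 : ℝ) ^ m * ((-1) ^ m / c * I) < 0 := by
  have hsq : ((-1 : ℝ) ^ m) ^ 2 = 1 := by rw [← pow_mul, mul_comm, pow_mul]; norm_num
  calc (-1 : ℝ) ^ m * ((-1) ^ m / c * I) = ((-1) ^ m) ^ 2 * (I / c) := by ring
    _ = I / c := by rw [hsq, one_mul]
    _ < 0 := div_neg_of_neg_of_pos hI hc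

lemma Real.sign_eq_neg_sign_of_neg_one_pow_mul_neg {m : ℕ} {a b : ℝ}
    (ha : (-1 : ℝ) ^ m * a < 0) (hb : (-1 : ℝ) ^ (m + 1) * b < 0) :
    Real.sign b = -Real.sign a := by
  rw [pow_succ] at hb
  rcases neg_one_pow_eq_or ℝ m with h | h <;> rw [h] at ha hb
  · rw [Real.sign_of_pos (by linarith), Real.sign_of_neg (by linarith), neg_neg]
  · rw [Real.sign_of_neg (by linarith), Real.sign_of_pos (by linarith)]

/-- For the M-step Adams-Moulton method with `M ≥ 2`, where
`β m = ((-1)^m / (m! (M-m)!)) ∫₀¹ ∏_{i=0, i≠m}^M (u+i-1) du`,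
the signs of consecutive coefficients alternate for `m ≥ 1`: precisely,
`β 1 > 0` and `(-1)^m * β m < 0` for all `2 ≤ m ≤ M`
(so `sign (β (m+1)) = - sign (β m)` for `1 ≤ m ≤ M-1`). -/
theorem am_sign_alternation (M : ℕ) (hM : 2 ≤ M) (β : ℕ → ℝ)
    (hβ : ∀ m ≤ M, β m = ((-1 : ℝ) ^ m / (Nat.factorial m * Nat.factorial (M - m))) *
      ∫ u in (0:ℝ)..1, ∏ i ∈ (Finset.range (M + 1)).erase m, (u + (i : ℝ) - 1)) :
    0 < β 1 ∧ (∀ m, 2 ≤ m → m ≤ M → (-1 : ℝ) ^ m * β m < 0) ∧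
      ∀ m, 1 ≤ m → m ≤ M - 1 → Real.sign (β (m + 1)) = - Real.sign (β m) := by
  have key : ∀ m, 1 ≤ m → m ≤ M → (-1 : ℝ) ^ m * β m < 0 := by
    intro m hm hmM
    have hzero : 0 ∈ (range (M + 1)).erase m := mem_erase.mpr ⟨by omega, by simp⟩
    rw [hβ m hmM]
    exact neg_one_pow_mul_neg_one_pow_div_mul_neg (by positivity)
      (integral_prod_add_natCast_sub_one_neg hzero)
  refine ⟨by simpa using key 1 le_rfl (by omega), fun m hm hmM => key m (by omega) hmM,
    fun m hm hmM => ?_⟩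
  exact Real.sign_eq_neg_sign_of_neg_one_pow_mul_neg (key m hm (by omega))
    (key (m + 1) (by omega) (by omega))
end

section
/- For every integer M ≥ 2, the second characteristic polynomial σ(r) = Σ_{m=0}^{M} β_m r^{M-m} of the M-step Adams-Moulton method has a real root in the open interval (-∞, -β₁/β₀), and in particular a root of absolute value strictly greater than 1. -/
/-!
Write `c m = (-1)^m β m`, so that `(-1)^M σ(-t) = Σ c m t^(M-m)`. Since `β m` is `(-1)^m` times a
positive multiple of `∫₀¹ ∏_{i ≠ m} (u + i - 1)`, and on `(0,1)` the only negative factor is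
`u - 1`, we get `c 0 > 0` and `c m < 0` for `m ≥ 1`. Hence at `s = β₁/β₀` the two leading terms
`β₀ s^M - β₁ s^(M-1)` cancel and the reversed polynomial is negative, while it tends to `+∞`;
the intermediate value theorem gives a root `t > s`, i.e. a root `-t < -s` of `σ`.

That `s > 1`, i.e. `β₀ < β₁`, follows from `β₀ = ∫₀¹ u P(u) / M!` and
`β₁ = ∫₀¹ (1 - u) P(u) / (M-1)!` with `P(u) = ∏_{i=2}^M (u + i - 1)`: reflecting `u ↦ 1 - u`
turns the first integral into `∫₀¹ (1 - u) P(1 - u)`, and `P(1 - u) < M P(u)` on `(0,1)`.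
-/

open Finset intervalIntegral
open Filter Topology

namespace AdamsMoulton

section ReversedPolynomial

variable {M : ℕ} {c : ℕ → ℝ}

lemma sum_mul_pow_sub_eq_pow_mul {t : ℝ} (ht : t ≠ 0) :
    ∑ m ∈ range (M + 1), c m * t ^ (M - m) = t ^ M * ∑ m ∈ range (M + 1), c m * t⁻¹ ^ m := by
  rw [mul_sum]
  refine sum_congr rfl fun m hm => ?_
  rw [pow_sub₀ t ht (Nat.lt_succ_iff.mp (mem_range.mp hm)), inv_pow]
  ring

lemma eventually_pos_sum_mul_pow_sub (h0 : 0 < c 0) :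
    ∀ᶠ t in atTop, 0 < ∑ m ∈ range (M + 1), c m * t ^ (M - m) := by
  have hg : Tendsto (fun x : ℝ => ∑ m ∈ range (M + 1), c m * x ^ m) (𝓝 0) (𝓝 (c 0)) := by
    have hcont : Continuous (fun x : ℝ => ∑ m ∈ range (M + 1), c m * x ^ m) := by fun_prop
    simpa [sum_range_succ'] using hcont.tendsto 0
  filter_upwards [(hg.comp tendsto_inv_atTop_zero).eventually (lt_mem_nhds h0),
    eventually_gt_atTop 0] with t hg ht
  rw [sum_mul_pow_sub_eq_pow_mul ht.ne']
  exact mul_pos (pow_pos ht M) hg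

lemma exists_gt_sum_mul_pow_sub_eq_zero (h0 : 0 < c 0) {s : ℝ}
    (hs : ∑ m ∈ range (M + 1), c m * s ^ (M - m) < 0) :
    ∃ t, s < t ∧ ∑ m ∈ range (M + 1), c m * t ^ (M - m) = 0 := by
  obtain ⟨R, hsR, hR⟩ := ((eventually_ge_atTop s).and (eventually_pos_sum_mul_pow_sub h0)).exists
  obtain ⟨t, ht, hroot⟩ := intermediate_value_Ioo hsR (by fun_prop : Continuous
    fun t : ℝ => ∑ m ∈ range (M + 1), c m * t ^ (M - m)).continuousOn ⟨hs, hR⟩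
  exact ⟨t, ht.1, hroot⟩

end ReversedPolynomial

lemma sum_mul_neg_pow_sub (M : ℕ) (β : ℕ → ℝ) (t : ℝ) :
    ∑ m ∈ range (M + 1), β m * (-t) ^ (M - m) =
      (-1) ^ M * ∑ m ∈ range (M + 1), (-1) ^ m * β m * t ^ (M - m) := by
  rw [mul_sum]
  refine sum_congr rfl fun m hm => ?_
  obtain ⟨k, rfl⟩ := Nat.exists_eq_add_of_le (Nat.lt_succ_iff.mp (mem_range.mp hm))
  rw [Nat.add_sub_cancel_left, neg_pow, pow_add]
  ring_nf
  simp

lemma sum_neg_one_pow_mul_pow_sub_ratio_neg {M : ℕ} (hM : 2 ≤ M) {β : ℕ → ℝ}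
    (h0 : 0 < β 0) (h1 : 0 < β 1) (hsign : ∀ m, 2 ≤ m → m ≤ M → (-1) ^ m * β m < 0) :
    ∑ m ∈ range (M + 1), (-1) ^ m * β m * (β 1 / β 0) ^ (M - m) < 0 := by
  obtain ⟨n, rfl⟩ : ∃ n, M = n + 1 + 1 := ⟨M - 2, by omega⟩
  set s := β 1 / β 0
  have hlead : β 0 * s ^ (n + 1 + 1) - β 1 * s ^ (n + 1) = 0 := by
    have hs : β 0 * s = β 1 := mul_div_cancel₀ _ h0.ne'
    rw [← hs]
    ring
  have htail : ∑ m ∈ range (n + 1), (-1) ^ (m + 1 + 1) * β (m + 1 + 1) * s ^ (n - m) < 0 :=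
    sum_neg (fun m hm => mul_neg_of_neg_of_pos
      (hsign (m + 1 + 1) (by omega) (by simp at hm; omega)) (by positivity)) nonempty_range_add_one
  rw [sum_range_succ', sum_range_succ']
  simp only [zero_add, Nat.add_sub_add_right, Nat.add_sub_cancel, pow_zero, pow_one,
    one_mul, neg_one_mul, Nat.sub_zero]
  linarith

theorem exists_root_lt_neg_ratio {M : ℕ} (hM : 2 ≤ M) {β : ℕ → ℝ} (h0 : 0 < β 0)
    (h01 : β 0 < β 1) (hsign : ∀ m, 2 ≤ m → m ≤ M → (-1) ^ m * β m < 0) :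
    ∃ r : ℝ, ∑ m ∈ range (M + 1), β m * r ^ (M - m) = 0 ∧ r < -(β 1 / β 0) ∧ 1 < |r| := by
  have hs : 1 < β 1 / β 0 := (one_lt_div h0).mpr h01
  obtain ⟨t, hst, hroot⟩ := exists_gt_sum_mul_pow_sub_eq_zero (by simpa using h0)
    (sum_neg_one_pow_mul_pow_sub_ratio_neg hM h0 (h0.trans h01) hsign)
  refine ⟨-t, ?_, neg_lt_neg hst, ?_⟩
  · rw [sum_mul_neg_pow_sub, hroot, mul_zero]
  · rw [abs_neg, abs_of_pos (by linarith)]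
    linarith

def amProd (M m : ℕ) (u : ℝ) : ℝ := ∏ i ∈ (range (M + 1)).erase m, (u + (i : ℝ) - 1)

noncomputable def amCoeff (M m : ℕ) : ℝ :=
  ((-1 : ℝ) ^ m / (Nat.factorial m * Nat.factorial (M - m))) * ∫ u in (0:ℝ)..1, amProd M m u

section Coefficients

variable {M : ℕ}

lemma prod_add_sub_one_pos {s : Finset ℕ} (hs : 0 ∉ s) {u : ℝ} (hu : 0 < u) :
    0 < ∏ i ∈ s, (u + (i : ℝ) - 1) :=
  prod_pos fun i hi => by
    have : (1 : ℝ) ≤ i := Nat.one_le_cast.mpr (Nat.pos_of_ne_zero (ne_of_mem_of_not_mem hi hs))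
    linarith

@[fun_prop]
lemma continuous_amProd (M m : ℕ) : Continuous (amProd M m) := by
  unfold amProd
  fun_prop

lemma amProd_zero_pos {u : ℝ} (hu : 0 < u) : 0 < amProd M 0 u :=
  prod_add_sub_one_pos (notMem_erase 0 _) hu

lemma amProd_neg {m : ℕ} (hm : m ≠ 0) {u : ℝ} (hu0 : 0 < u) (hu1 : u < 1) : amProd M m u < 0 := by
  have h0 : 0 ∈ (range (M + 1)).erase m := mem_erase.mpr ⟨hm.symm, by simp⟩
  rw [amProd, ← mul_prod_erase _ _ h0]
  exact mul_neg_of_neg_of_pos (by simpa using hu1) (prod_add_sub_one_pos (notMem_erase 0 _) hu0)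

lemma amCoeff_zero_pos : 0 < amCoeff M 0 := by
  refine mul_pos (by positivity) ?_
  exact intervalIntegral_pos_of_pos_on ((continuous_amProd M 0).intervalIntegrable 0 1)
    (fun u hu => amProd_zero_pos hu.1) one_pos

lemma neg_one_pow_mul_amCoeff_neg {m : ℕ} (hm : m ≠ 0) : (-1) ^ m * amCoeff M m < 0 := by
  have hI : ∫ u in (0:ℝ)..1, amProd M m u < 0 := by
    rw [← neg_pos, ← integral_neg]
    exact intervalIntegral_pos_of_pos_on ((continuous_amProd M m).neg.intervalIntegrable 0 1)
      (fun u hu => neg_pos.mpr (amProd_neg hm hu.1 hu.2)) one_pos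
  rw [amCoeff, ← mul_assoc, mul_div_assoc', ← pow_add, Even.neg_one_pow ⟨m, rfl⟩]
  exact mul_neg_of_pos_of_neg (by positivity) hI

lemma amProd_zero_eq (hM : 1 ≤ M) (u : ℝ) :
    amProd M 0 u = u * ∏ i ∈ Icc 2 M, (u + (i : ℝ) - 1) := by
  have : (range (M + 1)).erase 0 = insert 1 (Icc 2 M) := by ext; simp; omega
  rw [amProd, this, prod_insert (by simp)]
  push_cast
  ring

lemma amProd_one_eq (hM : 1 ≤ M) (u : ℝ) :
    amProd M 1 u = -((1 - u) * ∏ i ∈ Icc 2 M, (u + (i : ℝ) - 1)) := by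
  have : (range (M + 1)).erase 1 = insert 0 (Icc 2 M) := by ext; simp; omega
  rw [amProd, this, prod_insert (by simp)]
  push_cast
  ring

lemma prod_sub_lt_mul_prod (hM : 2 ≤ M) {u : ℝ} (hu0 : 0 < u) (hu1 : u < 1) :
    ∏ i ∈ Icc 2 M, ((i : ℝ) - u) < M * ∏ i ∈ Icc 2 M, (u + (i : ℝ) - 1) := by
  induction M, hM using Nat.le_induction with
  | base =>
    simp only [Icc_self, prod_singleton, Nat.cast_ofNat]
    linarith
  | succ n hn ih =>
    rw [prod_Icc_succ_top (by omega), prod_Icc_succ_top (by omega)]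
    have hpos : 0 < ∏ i ∈ Icc 2 n, (u + (i : ℝ) - 1) :=
      prod_add_sub_one_pos (by simp) hu0
    have hnonneg : 0 ≤ ∏ i ∈ Icc 2 n, ((i : ℝ) - u) :=
      prod_nonneg fun i hi => by
        have : (2 : ℝ) ≤ i := by exact_mod_cast (mem_Icc.mp hi).1
        linarith
    have hn : (2 : ℝ) ≤ n := by exact_mod_cast hn
    push_cast
    nlinarith

lemma integral_mul_prod_lt (hM : 2 ≤ M) :
    ∫ u in (0:ℝ)..1, u * ∏ i ∈ Icc 2 M, (u + (i : ℝ) - 1) <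
      M * ∫ u in (0:ℝ)..1, (1 - u) * ∏ i ∈ Icc 2 M, (u + (i : ℝ) - 1) := by
  set P : ℝ → ℝ := fun u => ∏ i ∈ Icc 2 M, (u + (i : ℝ) - 1)
  have hreflect : ∫ u in (0:ℝ)..1, u * P u = ∫ u in (0:ℝ)..1, (1 - u) * P (1 - u) := by
    simpa using (integral_comp_sub_left (fun u => u * P u) (1 : ℝ) (a := 0) (b := 1)).symm
  have hlt : ∀ u ∈ Set.Ioo (0 : ℝ) 1, 0 < M * ((1 - u) * P u) - (1 - u) * P (1 - u) := by
    intro u ⟨hu0, hu1⟩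
    have hP : P (1 - u) = ∏ i ∈ Icc 2 M, ((i : ℝ) - u) := prod_congr rfl fun i _ => by ring
    rw [sub_pos, hP, mul_left_comm]
    exact mul_lt_mul_of_pos_left (prod_sub_lt_mul_prod hM hu0 hu1) (by linarith)
  have hpos := intervalIntegral_pos_of_pos_on
    ((by fun_prop : Continuous fun u => M * ((1 - u) * P u) - (1 - u) * P (1 - u)).intervalIntegrable
      0 1) hlt one_pos
  rw [integral_sub (Continuous.intervalIntegrable (by fun_prop) 0 1)
    (Continuous.intervalIntegrable (by fun_prop) 0 1), integral_const_mul] at hpos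
  linarith

lemma amCoeff_zero_lt_one (hM : 2 ≤ M) : amCoeff M 0 < amCoeff M 1 := by
  have hfac : (M.factorial : ℝ) = M * (M - 1).factorial := by
    exact_mod_cast (Nat.mul_factorial_pred (by omega)).symm
  simp only [amCoeff, amProd_zero_eq (by omega : 1 ≤ M), amProd_one_eq (by omega : 1 ≤ M),
    integral_neg, pow_zero, pow_one, Nat.factorial_zero, Nat.factorial_one,
    Nat.cast_one, one_mul, Nat.sub_zero, neg_div, neg_mul_neg, hfac]
  field_simp
  exact integral_mul_prod_lt hM

end Coefficients

end AdamsMoulton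

open AdamsMoulton

/-- For every `M ≥ 2`, the second characteristic polynomial
`σ(r) = Σ_{m=0}^M β m * r^(M-m)` of the M-step Adams-Moulton method (with
`β m = ((-1)^m / (m! (M-m)!)) ∫₀¹ ∏_{i=0, i≠m}^M (u+i-1) du`) has a real root
`r < -β₁/β₀`, and in particular a root of absolute value strictly greater than 1. -/
theorem am_sigma_has_large_root (M : ℕ) (hM : 2 ≤ M) (β : ℕ → ℝ)
    (hβ : ∀ m ≤ M, β m = ((-1 : ℝ) ^ m / (Nat.factorial m * Nat.factorial (M - m))) *
      ∫ u in (0:ℝ)..1, ∏ i ∈ (Finset.range (M + 1)).erase m, (u + (i : ℝ) - 1)) :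
    ∃ r : ℝ, (∑ m ∈ Finset.range (M + 1), β m * r ^ (M - m)) = 0 ∧
      r < -(β 1 / β 0) ∧ 1 < |r| := by
  have hcoeff : ∀ m ≤ M, β m = amCoeff M m := hβ
  refine exists_root_lt_neg_ratio hM ?_ ?_ fun m h2 hm => ?_
  · rw [hcoeff 0 (by omega)]
    exact amCoeff_zero_pos
  · rw [hcoeff 0 (by omega), hcoeff 1 (by omega)]
    exact amCoeff_zero_lt_one hM
  · rw [hcoeff m hm]
    exact neg_one_pow_mul_amCoeff_neg (by omega)
end

section
/- Let β₀,...,β_M be real numbers with β₀ > 0, β₁ > β₀, and (-1)^m β_m ≤ 0 with strict inequality for at least one m in {2,...,M}. Then the polynomial σ(r) = Σ_{m=0}^M β_m r^{M-m} has a real root r₀ with r₀ < -β₁/β₀ < -1. -/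
/-!
Put `g r = Σ_{m ≤ M} (-1)^m β_m r^(M-m)`, so that `σ(-r) = (-1)^M g(r)`. At `c = β₁/β₀` the two
leading terms of `g` cancel and every remaining term is `≤ 0`, one of them `< 0`, so `g c < 0`;
on the other hand `g r = r^M (β₀ + O(1/r)) → +∞`. The intermediate value theorem gives a root
`r > c` of `g`, and `-r` is the required root of `σ`.
-/

open Finset Filter Topology

lemma neg_one_pow_sub_eq_mul {R : Type*} [Ring R] {M m : ℕ} (hm : m ≤ M) :
    (-1 : R) ^ (M - m) = (-1) ^ M * (-1) ^ m := by
  obtain ⟨k, rfl⟩ := Nat.exists_eq_add_of_le hm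
  have hsq : (-1 : R) ^ m * (-1) ^ m = 1 := by rw [← pow_add, ← two_mul, pow_mul]; simp
  rw [Nat.add_sub_cancel_left, pow_add, mul_assoc, ((Commute.neg_one_left _).pow_pow _ _).eq,
    ← mul_assoc, hsq, one_mul]

lemma sum_mul_neg_pow_sub {R : Type*} [CommRing R] (M : ℕ) (β : ℕ → R) (r : R) :
    ∑ m ∈ range (M + 1), β m * (-r) ^ (M - m) =
      (-1) ^ M * ∑ m ∈ range (M + 1), (-1) ^ m * β m * r ^ (M - m) := by
  rw [mul_sum]
  refine sum_congr rfl fun m hm => ?_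
  rw [neg_pow, neg_one_pow_sub_eq_mul (Nat.lt_succ_iff.mp (mem_range.mp hm))]
  ring

lemma sum_mul_pow_sub_neg {M : ℕ} {a : ℕ → ℝ} {c : ℝ} (hc : 0 < c) (hcancel : a 0 * c + a 1 = 0)
    (hle : ∀ m, 2 ≤ m → m ≤ M → a m ≤ 0) (hlt : ∃ m, 2 ≤ m ∧ m ≤ M ∧ a m < 0) :
    ∑ m ∈ range (M + 1), a m * c ^ (M - m) < 0 := by
  obtain ⟨m₀, hm₀, hm₀M, ham₀⟩ := hlt
  have hhead : a 0 * c ^ (M - 0) + a 1 * c ^ (M - 1) = 0 := by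
    obtain ⟨k, rfl⟩ : ∃ k, M = k + 1 := ⟨M - 1, by omega⟩
    rw [Nat.add_sub_cancel, Nat.sub_zero, pow_succ]
    linear_combination c ^ k * hcancel
  have htail : ∑ m ∈ Ico 2 (M + 1), a m * c ^ (M - m) < 0 :=
    sum_neg' (fun m hm => mul_nonpos_of_nonpos_of_nonneg
        (hle m (mem_Ico.mp hm).1 (Nat.lt_succ_iff.mp (mem_Ico.mp hm).2)) (pow_nonneg hc.le _))
      ⟨m₀, mem_Ico.mpr ⟨hm₀, Nat.lt_succ_of_le hm₀M⟩, mul_neg_of_neg_of_pos ham₀ (pow_pos hc _)⟩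
  rwa [range_eq_Ico, sum_eq_sum_Ico_succ_bot (by omega), sum_eq_sum_Ico_succ_bot (by omega),
    ← add_assoc, hhead, zero_add]

/-- `Σ a_m r^(M-m) = r^M · Σ a_m (r⁻¹)^m`, and the second factor tends to `a 0`. -/
lemma tendsto_sum_mul_pow_sub_atTop {M : ℕ} (hM : M ≠ 0) {a : ℕ → ℝ} (ha : 0 < a 0) :
    Tendsto (fun r => ∑ m ∈ range (M + 1), a m * r ^ (M - m)) atTop atTop := by
  set q : ℝ → ℝ := fun s => ∑ m ∈ range (M + 1), a m * s ^ m
  have hq : Tendsto (fun r : ℝ => q r⁻¹) atTop (𝓝 (a 0)) := by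
    have hq0 : q 0 = a 0 := by simp [q, sum_range_succ']
    rw [← hq0]
    have hqc : Continuous q := continuous_finsetSum _ fun m _ => by fun_prop
    exact (hqc.tendsto 0).comp tendsto_inv_atTop_zero
  refine ((tendsto_pow_atTop hM).atTop_mul_pos ha hq).congr' ?_
  filter_upwards [eventually_gt_atTop 0] with r hr
  rw [mul_sum]
  refine sum_congr rfl fun m hm => ?_
  rw [pow_sub₀ r hr.ne' (Nat.lt_succ_iff.mp (mem_range.mp hm)), inv_pow]
  ring

theorem sigma_root_beyond_ratio_general (M : ℕ) (β : ℕ → ℝ)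
    (h0 : 0 < β 0) (h10 : β 0 < β 1)
    (hsign : ∀ m, 2 ≤ m → m ≤ M → (-1 : ℝ) ^ m * β m ≤ 0)
    (hstrict : ∃ m, 2 ≤ m ∧ m ≤ M ∧ (-1 : ℝ) ^ m * β m < 0) :
    ∃ r₀ : ℝ, (∑ m ∈ Finset.range (M + 1), β m * r₀ ^ (M - m)) = 0 ∧
      r₀ < -(β 1 / β 0) ∧ -(β 1 / β 0) < -1 := by
  set c := β 1 / β 0
  set g : ℝ → ℝ := fun r => ∑ m ∈ range (M + 1), (-1) ^ m * β m * r ^ (M - m)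
  have hc : 1 < c := (one_lt_div h0).mpr h10
  have hcancel : (-1) ^ 0 * β 0 * c + (-1) ^ 1 * β 1 = 0 := by
    simp only [c, pow_zero, pow_one]; field_simp; ring
  have hgc : g c < 0 := sum_mul_pow_sub_neg (zero_lt_one.trans hc) hcancel hsign hstrict
  have hM : M ≠ 0 := by obtain ⟨m, hm, hmM, -⟩ := hstrict; omega
  have hg : Tendsto g atTop atTop := tendsto_sum_mul_pow_sub_atTop hM (by simpa using h0)
  obtain ⟨R, hgR, hcR⟩ := ((hg.eventually_gt_atTop 0).and (eventually_ge_atTop c)).exists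
  have hgcont : Continuous g := continuous_finsetSum _ fun m _ => by fun_prop
  obtain ⟨r, ⟨hcr, -⟩, hgr⟩ := intermediate_value_Ioo hcR hgcont.continuousOn ⟨hgc, hgR⟩
  refine ⟨-r, ?_, neg_lt_neg hcr, neg_lt_neg hc⟩
  rw [sum_mul_neg_pow_sub]
  simp only [g] at hgr
  rw [hgr, mul_zero]

/-- Let `β₀,...,β_M` be reals with `β₀ > 0`, `β₁ > β₀`, `(-1)^m β_m ≤ 0` for
`2 ≤ m ≤ M`, strict for at least one such `m`. Then `σ(r) = Σ_{m=0}^M β_m r^{M-m}`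
has a real root `r₀ < -β₁/β₀ < -1`. -/
theorem sigma_root_beyond_ratio (M : ℕ) (hM : 2 ≤ M) (β : ℕ → ℝ)
    (h0 : 0 < β 0) (h10 : β 0 < β 1)
    (hsign : ∀ m, 2 ≤ m → m ≤ M → (-1 : ℝ) ^ m * β m ≤ 0)
    (hstrict : ∃ m, 2 ≤ m ∧ m ≤ M ∧ (-1 : ℝ) ^ m * β m < 0) :
    ∃ r₀ : ℝ, (∑ m ∈ Finset.range (M + 1), β m * r₀ ^ (M - m)) = 0 ∧
      r₀ < -(β 1 / β 0) ∧ -(β 1 / β 0) < -1 :=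
  sigma_root_beyond_ratio_general M β h0 h10 hsign hstrict
end

section
/- Consider the scalar recurrence e_n = -e_{n-1} + 2τ_n for n = 1,...,N on a uniform grid of [a,b] with h = (b-a)/N, where |e_0| ≤ C₀h² and τ_n = E(t_n)h² + O(h³) for a continuously differentiable function E on [a,b]. Then max_{1≤n≤N} |e_n| = O(h²) as h → 0. -/
/-!
Subtract the smooth part `g n = E(tₙ) h²` of the forcing from the error. The remainder
`sₙ = eₙ - gₙ` obeys the same alternating recurrence, now forced by `2 (τₙ - gₙ) + (gₙ - gₙ₋₁)`,
and both terms are `O(h³)`: the first by the truncation-error expansion, the second because `E`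
is Lipschitz. The sign flip does not amplify `|sₙ|`, so after at most `N = (b - a)/h` steps
`|sₙ| = O(h²)`, and so is `eₙ = sₙ + gₙ`.
-/

open NNReal Set

lemma le_add_mul_of_succ_le_add {x : ℕ → ℝ} {δ : ℝ} {N : ℕ}
    (h : ∀ n < N, x (n + 1) ≤ x n + δ) : ∀ n ≤ N, x n ≤ x 0 + n * δ := by
  intro n hn
  induction n with
  | zero => simp
  | succ m ih =>
    push_cast
    linarith [ih (by omega), h m (by omega)]

theorem norm_sub_le_of_alternating_recurrence {V : Type*} [SeminormedAddCommGroup V]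
    {e τ g : ℕ → V} {ε η : ℝ} {N : ℕ}
    (hrec : ∀ n < N, e (n + 1) = -e n + 2 • τ (n + 1))
    (hτ : ∀ n < N, ‖τ (n + 1) - g (n + 1)‖ ≤ ε)
    (hg : ∀ n < N, ‖g (n + 1) - g n‖ ≤ η) :
    ∀ n ≤ N, ‖e n - g n‖ ≤ ‖e 0 - g 0‖ + n * (2 * ε + η) := by
  refine le_add_mul_of_succ_le_add fun n hn ↦ ?_
  have hsplit : e (n + 1) - g (n + 1)
      = -(e n - g n) + 2 • (τ (n + 1) - g (n + 1)) + (g (n + 1) - g n) := by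
    rw [hrec n hn]; abel
  calc ‖e (n + 1) - g (n + 1)‖
      ≤ ‖e n - g n‖ + 2 * ‖τ (n + 1) - g (n + 1)‖ + ‖g (n + 1) - g n‖ := by
        rw [hsplit]
        refine norm_add₃_le.trans ?_
        rw [norm_neg]
        gcongr
        exact norm_nsmul_le
    _ ≤ ‖e n - g n‖ + (2 * ε + η) := by linarith [hτ n hn, hg n hn]

lemma add_mul_div_mem_Icc {a b : ℝ} (hab : a ≤ b) {n N : ℕ} (hn : n ≤ N) :
    a + n * ((b - a) / N) ∈ Icc a b := by
  rcases Nat.eq_zero_or_pos N with rfl | hN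
  · simp [show n = 0 by omega, hab]
  have hNpos : (0 : ℝ) < N := by exact_mod_cast hN
  have hnN : (n : ℝ) ≤ N := by exact_mod_cast hn
  refine ⟨le_add_of_nonneg_right (by positivity), ?_⟩
  calc a + n * ((b - a) / N) ≤ a + N * ((b - a) / N) := by gcongr
    _ = b := by rw [mul_div_cancel₀ _ hNpos.ne']; ring

theorem abs_le_of_alternating_recurrence_of_lipschitzOnWith {a b : ℝ} (hab : a ≤ b)
    {E : ℝ → ℝ} {M : ℝ} {K : ℝ≥0} (hM : ∀ x ∈ Icc a b, |E x| ≤ M)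
    (hK : LipschitzOnWith K E (Icc a b)) {C₀ C₁ : ℝ} {N : ℕ} {e τ : ℕ → ℝ}
    (he0 : |e 0| ≤ C₀ * ((b - a) / N) ^ 2)
    (hrec : ∀ n, 1 ≤ n → n ≤ N → e n = -e (n - 1) + 2 * τ n)
    (hτ : ∀ n, 1 ≤ n → n ≤ N →
      |τ n - E (a + n * ((b - a) / N)) * ((b - a) / N) ^ 2| ≤ C₁ * ((b - a) / N) ^ 3)
    {n : ℕ} (hn1 : 1 ≤ n) (hnN : n ≤ N) :
    |e n| ≤ (C₀ + 2 * M + (2 * C₁ + K) * (b - a)) * ((b - a) / N) ^ 2 := by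
  set h := (b - a) / N with hh
  set g : ℕ → ℝ := fun n ↦ E (a + n * h) * h ^ 2
  have hh0 : 0 ≤ h := div_nonneg (by linarith) (Nat.cast_nonneg N)
  have hgM : ∀ m ≤ N, |g m| ≤ M * h ^ 2 := fun m hm ↦ by
    simp only [g, abs_mul, abs_pow, abs_of_nonneg hh0]
    gcongr
    exact hM _ (add_mul_div_mem_Icc hab hm)
  have hgK : ∀ m < N, |g (m + 1) - g m| ≤ K * h ^ 3 := fun m hm ↦ by
    have hdist := hK.dist_le_mul (a + (m + 1 : ℕ) * h) (add_mul_div_mem_Icc hab hm)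
      (a + m * h) (add_mul_div_mem_Icc hab hm.le)
    rw [Real.dist_eq, Real.dist_eq, Nat.cast_succ, add_sub_add_left_eq_sub, ← sub_mul,
      add_sub_cancel_left, one_mul, abs_of_nonneg hh0] at hdist
    calc |g (m + 1) - g m| = |E (a + (m + 1 : ℕ) * h) - E (a + m * h)| * h ^ 2 := by
          simp only [g, ← sub_mul, abs_mul, abs_pow, abs_of_nonneg hh0]
      _ ≤ K * h * h ^ 2 := by push_cast; gcongr
      _ = K * h ^ 3 := by ring
  have hs := norm_sub_le_of_alternating_recurrence (e := e) (τ := τ) (g := g) (N := N)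
    (fun m hm ↦ by simpa using hrec (m + 1) (by omega) hm)
    (fun m hm ↦ hτ (m + 1) (by omega) hm) hgK n hnN
  have hs0 : |e 0 - g 0| ≤ (C₀ + M) * h ^ 2 := by
    linarith [abs_sub (e 0) (g 0), hgM 0 (Nat.zero_le N)]
  have hsteps : (n : ℝ) * (2 * (C₁ * h ^ 3) + K * h ^ 3) ≤ (2 * C₁ + K) * (b - a) * h ^ 2 := by
    have hC₁ : 0 ≤ C₁ * h ^ 3 := (abs_nonneg _).trans (hτ n hn1 hnN)
    have hNh : (N : ℝ) * h = b - a := by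
      rw [hh, mul_div_cancel₀]
      exact Nat.cast_ne_zero.mpr (by omega)
    calc (n : ℝ) * (2 * (C₁ * h ^ 3) + K * h ^ 3) ≤ N * (2 * (C₁ * h ^ 3) + K * h ^ 3) := by
          gcongr
      _ = (2 * C₁ + K) * (N * h) * h ^ 2 := by ring
      _ = (2 * C₁ + K) * (b - a) * h ^ 2 := by rw [hNh]
  simp only [Real.norm_eq_abs] at hs
  linarith [abs_sub_abs_le_abs_sub (e n) (g n), hgM n hnN]

/-- Error recurrence for AM-1 dynamics discovery: for the scalar recurrence
`e_n = -e_{n-1} + 2 τ_n` on a uniform grid of `[a,b]` with `h = (b-a)/N`, where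
`|e₀| ≤ C₀ h²` and `τ_n = E(t_n) h² + O(h³)` with `E` continuously differentiable
on `[a,b]`, we have `max_{1≤n≤N} |e_n| = O(h²)` as `h → 0`. -/
theorem am1_error_recurrence (a b : ℝ) (hab : a < b) (E : ℝ → ℝ)
    (hE : ContDiffOn ℝ 1 E (Set.Icc a b)) (C₀ C₁ : ℝ) :
    ∃ C : ℝ, ∀ N : ℕ, 1 ≤ N → ∀ e τ : ℕ → ℝ,
      |e 0| ≤ C₀ * ((b - a) / N) ^ 2 →
      (∀ n, 1 ≤ n → n ≤ N → e n = -e (n - 1) + 2 * τ n) →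
      (∀ n, 1 ≤ n → n ≤ N →
        |τ n - E (a + n * ((b - a) / N)) * ((b - a) / N) ^ 2| ≤ C₁ * ((b - a) / N) ^ 3) →
      ∀ n, 1 ≤ n → n ≤ N → |e n| ≤ C * ((b - a) / N) ^ 2 := by
  obtain ⟨M, hM⟩ := isCompact_Icc.exists_bound_of_continuousOn hE.continuousOn
  obtain ⟨K, hK⟩ := hE.exists_lipschitzOnWith one_ne_zero (convex_Icc a b) isCompact_Icc
  exact ⟨C₀ + 2 * M + (2 * C₁ + K) * (b - a), fun N _ e τ he0 hrec hτ n hn1 hnN ↦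
    abs_le_of_alternating_recurrence_of_lipschitzOnWith hab.le hM hK he0 hrec hτ hn1 hnN⟩
end
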